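/- Let ζ₁ < … < ζ_m be real numbers, σ : ℝ → ℝ Lipschitz with σ(ζ_i) ≠ 0 for each i, and define α_i = (μ(ζ_i−) − μ(ζ_i+))/(2σ²(ζ_i)) for a piecewise Lipschitz μ with one-sided limits at each ζ_i. Let φ be as below, ν ∈ (0,φ), and define G(x) = x + Σ_{i=1}^m α_i φ((x−ζ_i)/ν)(x−ζ_i)|x−ζ_i| with bump φ(u) = (1−u²)⁴ for |u| ≤ 1 and 0 otherwise. Then G is differentiable on ℝ and G'(ζ_i) = 1 for all i ∈ {1,…,m}. -/

import Mathlib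

/-- The bump function used for the transformation `G`. -/
noncomputable def bump (u : ℝ) : ℝ := if |u| ≤ 1 then (1 - u ^ 2) ^ 4 else 0

/-- The transformation `G` built from the bump function. -/
noncomputable def Gtrans {m : ℕ} (ζ α : Fin m → ℝ) (ν : ℝ) (x : ℝ) : ℝ :=
  x + ∑ i, α i * bump ((x - ζ i) / ν) * ((x - ζ i) * |x - ζ i|)

/-!
Since `y ↦ y * |y|` is differentiable with derivative `2 * |y|`, so is the squared positive part
`max t 0 ^ 2 = (t ^ 2 + t * |t|) / 2`, and hence `bump u = (max (1 - u ^ 2) 0 ^ 2) ^ 2`. Each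
summand of `G` is therefore differentiable. At `ζ i` the `i`-th summand has derivative `0`, being
a differentiable function times `(x - ζ i) * |x - ζ i|`, which vanishes to second order; every
other summand vanishes on a neighbourhood of `ζ i`, because the supports `[ζ j - ν, ζ j + ν]` are
separated by the gaps `> 2 ν`.
-/

open Filter Topology Asymptotics

lemma abs_mul_abs_sub_linearization_le (x y : ℝ) :
    |y * |y| - x * |x| - (y - x) * (2 * |x|)| ≤ (y - x) ^ 2 := by
  rw [abs_le]
  constructor <;> rcases abs_cases x with ⟨hx, hx0⟩ | ⟨hx, hx0⟩ <;>
    rcases abs_cases y with ⟨hy, hy0⟩ | ⟨hy, hy0⟩ <;> rw [hx, hy] <;> nlinarith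

lemma hasDerivAt_mul_abs (x : ℝ) : HasDerivAt (fun y : ℝ => y * |y|) (2 * |x|) x := by
  rw [hasDerivAt_iff_isLittleO]
  refine IsBigO.trans_isLittleO ?_ (isLittleO_pow_sub_sub x one_lt_two)
  refine IsBigO.of_bound 1 (Eventually.of_forall fun y => ?_)
  simpa [smul_eq_mul, Real.norm_eq_abs, mul_comm] using abs_mul_abs_sub_linearization_le x y

lemma max_zero_sq_eq (t : ℝ) : max t 0 ^ 2 = (t ^ 2 + t * |t|) / 2 := by
  rcases le_total 0 t with ht | ht
  · rw [max_eq_left ht, abs_of_nonneg ht]; ring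
  · rw [max_eq_right ht, abs_of_nonpos ht]; ring

lemma differentiable_max_zero_sq : Differentiable ℝ (fun t : ℝ => max t 0 ^ 2) := by
  simp_rw [max_zero_sq_eq]
  exact ((differentiable_pow 2).add fun t => (hasDerivAt_mul_abs t).differentiableAt).div_const 2

lemma bump_eq (u : ℝ) : bump u = (max (1 - u ^ 2) 0 ^ 2) ^ 2 := by
  rw [bump]
  split_ifs with hu
  · rw [max_eq_left (by nlinarith [sq_abs u, abs_nonneg u])]; ring
  · rw [max_eq_right (by nlinarith [sq_abs u, abs_nonneg u])]; ring

lemma differentiable_bump : Differentiable ℝ bump := by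
  rw [funext bump_eq]
  exact (differentiable_max_zero_sq.comp
    ((differentiable_const 1).sub (differentiable_pow 2))).pow 2

lemma bump_eq_zero {u : ℝ} (hu : 1 < |u|) : bump u = 0 := by
  rw [bump, if_neg hu.not_ge]

noncomputable def kink (c a ν x : ℝ) : ℝ := a * bump ((x - c) / ν) * ((x - c) * |x - c|)

section kink

variable (c a ν : ℝ)

lemma hasDerivAt_sub_mul_abs_sub (x : ℝ) :
    HasDerivAt (fun y => (y - c) * |y - c|) (2 * |x - c|) x := by
  exact ((hasDerivAt_mul_abs (x - c)).comp x ((hasDerivAt_id x).sub_const c)).congr_deriv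
    (mul_one _)

lemma differentiable_bump_div : Differentiable ℝ (fun x => a * bump ((x - c) / ν)) :=
  (differentiable_bump.comp ((differentiable_id.sub_const c).div_const ν)).const_mul a

lemma differentiable_kink : Differentiable ℝ (kink c a ν) := fun x =>
  (differentiable_bump_div c a ν x).mul (hasDerivAt_sub_mul_abs_sub c x).differentiableAt

lemma hasDerivAt_kink_self : HasDerivAt (kink c a ν) 0 c := by
  refine ((differentiable_bump_div c a ν c).hasDerivAt.fun_mul
    (hasDerivAt_sub_mul_abs_sub c c)).congr_deriv ?_
  simp

lemma hasDerivAt_kink_of_lt_abs {x : ℝ} (hν : 0 < ν) (hx : ν < |x - c|) :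
    HasDerivAt (kink c a ν) 0 x := by
  refine (hasDerivAt_const x 0).congr_of_eventuallyEq ?_
  have hnhds : {y : ℝ | ν < |y - c|} ∈ 𝓝 x :=
    (isOpen_lt continuous_const (continuous_abs.comp (continuous_sub_right c))).mem_nhds hx
  filter_upwards [hnhds] with y hy
  rw [kink, bump_eq_zero (by rwa [abs_div, abs_of_pos hν, one_lt_div hν]), mul_zero, zero_mul]

end kink

lemma Monotone.lt_abs_sub_of_lt_succ_sub {m : ℕ} {ζ : Fin m → ℝ} (hζ : Monotone ζ) {d : ℝ}
    (hd : ∀ i : Fin m, ∀ h : i.val + 1 < m, d < ζ ⟨i.val + 1, h⟩ - ζ i) {i j : Fin m}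
    (hij : i ≠ j) : d < |ζ i - ζ j| := by
  wlog hlt : i < j generalizing i j
  · rw [abs_sub_comm]
    exact this hij.symm (lt_of_le_of_ne (not_lt.mp hlt) hij.symm)
  have hsucc : i.val + 1 < m := lt_of_le_of_lt hlt j.isLt
  calc d < ζ ⟨i.val + 1, hsucc⟩ - ζ i := hd i hsucc
    _ ≤ ζ j - ζ i := by gcongr; exact hζ (Fin.mk_le_of_le_val hlt)
    _ ≤ |ζ i - ζ j| := by rw [abs_sub_comm]; exact le_abs_self _

theorem stmt_11_general (m : ℕ) (ζ α : Fin m → ℝ) (hζ : StrictMono ζ) (ν : ℝ) (hν : 0 < ν)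
    (hν2 : ∀ i : Fin m, ∀ h : i.val + 1 < m, 2 * ν < ζ ⟨i.val + 1, h⟩ - ζ i) :
    Differentiable ℝ (Gtrans ζ α ν) ∧ ∀ i, deriv (Gtrans ζ α ν) (ζ i) = 1 := by
  have hG : Gtrans ζ α ν = fun x => x + ∑ j, kink (ζ j) (α j) ν x := rfl
  refine ⟨hG ▸ differentiable_id.add
    (Differentiable.fun_sum fun j _ => differentiable_kink _ _ _), fun i => ?_⟩
  have hkinks : ∀ j, HasDerivAt (kink (ζ j) (α j) ν) 0 (ζ i) := fun j => by
    obtain rfl | hji := eq_or_ne j i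
    · exact hasDerivAt_kink_self _ _ _
    · refine hasDerivAt_kink_of_lt_abs _ _ _ hν ?_
      linarith [hζ.monotone.lt_abs_sub_of_lt_succ_sub hν2 hji.symm]
  rw [hG, ((hasDerivAt_id' (ζ i)).fun_add (HasDerivAt.fun_sum fun j _ => hkinks j)).deriv]
  simp

/-- `G` is differentiable on ℝ and `G'(ζ i) = 1` for all `i`. -/
theorem stmt_11 (m : ℕ) (ζ α : Fin m → ℝ) (hζ : StrictMono ζ) (ν : ℝ) (hν : 0 < ν)
    (hν1 : ∀ i, 8 * |α i| * ν < 1)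
    (hν2 : ∀ i : Fin m, ∀ h : i.val + 1 < m, 2 * ν < ζ ⟨i.val + 1, h⟩ - ζ i) :
    Differentiable ℝ (Gtrans ζ α ν) ∧ ∀ i, deriv (Gtrans ζ α ν) (ζ i) = 1 :=
  stmt_11_general m ζ α hζ ν hν hν2
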